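/- arXiv:1806.11151 — 3 statements merged into one kernel-verified Lean document; each statement's English description precedes it below -/
import Mathlib

section
/- Let K ⊆ ℝ³ be a compact set which has a neighbourhood basis of solid tori, i.e., every neighbourhood of K contains a solid torus T with K ⊆ interior(T). Then K is nonempty and connected. -/
/-- A subset `T ⊆ ℝ³` is a solid torus if, with the subspace topology, it is homeomorphic to
`S¹ × D²`, the product of the unit circle and the closed unit disc in the plane. -/
def IsSolidTorus (T : Set (EuclideanSpace ℝ (Fin 3))) : Prop :=
  Nonempty (T ≃ₜ
    (Metric.sphere (0 : EuclideanSpace ℝ (Fin 2)) 1 ×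
      Metric.closedBall (0 : EuclideanSpace ℝ (Fin 2)) 1))

/-- A solid torus is a connected set, being homeomorphic to the connected space `S¹ × D²`. -/
lemma solidTorus_isConnected {T : Set (EuclideanSpace ℝ (Fin 3))} (h : IsSolidTorus T) :
    IsConnected T := by
  obtain ⟨e⟩ := h
  have hrank : (1:Cardinal) < Module.rank ℝ (EuclideanSpace ℝ (Fin 2)) := by
    rw [← Module.finrank_eq_rank ℝ]
    norm_cast
    simp [finrank_euclideanSpace]
  have h1 : IsConnected (Metric.sphere (0 : EuclideanSpace ℝ (Fin 2)) 1) :=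
    isConnected_sphere hrank _ zero_le_one
  have h2 : IsConnected (Metric.closedBall (0 : EuclideanSpace ℝ (Fin 2)) 1) :=
    (convex_closedBall _ _).isConnected (Metric.nonempty_closedBall.2 zero_le_one)
  have := isConnected_iff_connectedSpace.1 h1
  have := isConnected_iff_connectedSpace.1 h2
  rw [isConnected_iff_connectedSpace]
  exact e.symm.surjective.connectedSpace e.symm.continuous

/-- A compact set `K ⊆ ℝ³` having a neighbourhood basis of solid tori (every neighbourhood of
`K` contains a solid torus `T` with `K ⊆ interior T`) is nonempty and connected. -/
theorem isConnected_of_solidTorus_neighbourhood_basis (K : Set (EuclideanSpace ℝ (Fin 3)))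
    (hK : IsCompact K)
    (hbasis : ∀ U : Set (EuclideanSpace ℝ (Fin 3)), K ⊆ interior U →
      ∃ T : Set (EuclideanSpace ℝ (Fin 3)), IsSolidTorus T ∧ K ⊆ interior T ∧ T ⊆ U) :
    IsConnected K := by
  have hne : K.Nonempty := by
    by_contra h
    rw [Set.not_nonempty_iff_eq_empty] at h
    obtain ⟨T, hT, -, hTsub⟩ := hbasis ∅ (by simp [h])
    have hTconn := solidTorus_isConnected hT
    exact (hTconn.nonempty.mono hTsub).ne_empty rfl
  refine ⟨hne, (isPreconnected_iff_subset_of_fully_disjoint_closed hK.isClosed).2 ?_⟩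
  intro u v hu hv huv hdisj
  obtain ⟨U, V, hUo, hVo, hKuU, hKvV, hUV⟩ :=
    SeparatedNhds.of_isCompact_isCompact (hK.inter_right hu) (hK.inter_right hv)
      (hdisj.mono Set.inter_subset_right Set.inter_subset_right)
  have hKUV : K ⊆ U ∪ V := fun x hx => by
    rcases huv hx with hxu | hxv
    · exact Or.inl (hKuU ⟨hx, hxu⟩)
    · exact Or.inr (hKvV ⟨hx, hxv⟩)
  obtain ⟨T, hT, hKT, hTsub⟩ := hbasis (U ∪ V)
    (by rwa [(hUo.union hVo).interior_eq])
  have hKT' : K ⊆ T := hKT.trans interior_subset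
  rcases (solidTorus_isConnected hT).isPreconnected.subset_or_subset hUo hVo hUV hTsub with hTU | hTV
  · left
    intro x hx
    rcases huv hx with hxu | hxv
    · exact hxu
    · exact absurd (hKvV ⟨hx, hxv⟩) (hUV.ne_of_mem (hTU (hKT' hx)) · rfl)
  · right
    intro x hx
    rcases huv hx with hxu | hxv
    · exact absurd (hKuU ⟨hx, hxu⟩) (fun hm => hUV.ne_of_mem hm (hTV (hKT' hx)) rfl)
    · exact hxv
end

section
/- Let X be a Hausdorff topological space, f : X → X a homeomorphism, and K ⊆ X a nonempty compact set with f(K) = K. Suppose there exists a compact connected set U ⊆ X with K ⊆ interior(U) such that for every open set V with K ⊆ V there is n₀ ∈ ℕ with fⁿ(U) ⊆ V for every n ≥ n₀ (where fⁿ denotes the n-th iterate of f). Then K is connected. -/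
/-- Let `f` be a homeomorphism of a Hausdorff space `X` and `K` a nonempty compact invariant
set. If there is a compact connected set `U` with `K ⊆ interior U` such that for every open
set `V ⊇ K` the iterates `f^[n] '' U` are contained in `V` for all sufficiently large `n`,
then `K` is connected. -/
theorem isConnected_of_attracts_compact_connected_nbhd {X : Type*} [TopologicalSpace X]
    [T2Space X] (f : X ≃ₜ X) (K : Set X) (hK : IsCompact K) (hne : K.Nonempty)
    (hinv : ⇑f '' K = K)
    (hU : ∃ U : Set X, IsCompact U ∧ IsConnected U ∧ K ⊆ interior U ∧
      ∀ V : Set X, IsOpen V → K ⊆ V → ∃ n₀ : ℕ, ∀ n ≥ n₀, (⇑f)^[n] '' U ⊆ V) :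
    IsConnected K := by
  obtain ⟨U, hUc, hUconn, hKint, hattr⟩ := hU
  -- K is invariant under all iterates
  have hiter : ∀ n : ℕ, (⇑f)^[n] '' K = K := by
    intro n
    induction n with
    | zero => simp
    | succ n ih =>
      rw [Function.iterate_succ, Set.image_comp, hinv, ih]
  have hKU : K ⊆ U := hKint.trans interior_subset
  have hKsub : ∀ n : ℕ, K ⊆ (⇑f)^[n] '' U := by
    intro n
    calc K = (⇑f)^[n] '' K := (hiter n).symm
    _ ⊆ (⇑f)^[n] '' U := Set.image_mono hKU
  refine ⟨hne, ?_⟩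
  rw [isPreconnected_closed_iff]
  intro t t' ht ht' hcover ⟨x, hxK, hxt⟩ ⟨y, hyK, hyt'⟩
  by_contra hempty
  rw [Set.not_nonempty_iff_eq_empty] at hempty
  have hdisj : Disjoint (K ∩ t) (K ∩ t') := by
    rw [Set.disjoint_iff_inter_eq_empty, ← hempty]
    ext z; simp; tauto
  obtain ⟨u, v, hu, hv, hAu, hBv, huv⟩ :=
    SeparatedNhds.of_isCompact_isCompact (hK.inter_right ht) (hK.inter_right ht') hdisj
  have hKuv : K ⊆ u ∪ v := by
    intro z hz
    rcases hcover hz with h | h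
    · exact Or.inl (hAu ⟨hz, h⟩)
    · exact Or.inr (hBv ⟨hz, h⟩)
  obtain ⟨n₀, hn₀⟩ := hattr (u ∪ v) (hu.union hv) hKuv
  have hC : IsConnected ((⇑f)^[n₀] '' U) :=
    hUconn.image _ ((f.continuous.iterate n₀).continuousOn)
  have := hC.isPreconnected u v hu hv (hn₀ n₀ le_rfl)
    ⟨x, hKsub n₀ hxK, hAu ⟨hxK, hxt⟩⟩ ⟨y, hKsub n₀ hyK, hBv ⟨hyK, hyt'⟩⟩
  obtain ⟨z, -, hzu, hzv⟩ := this
  exact huv.ne_of_mem hzu hzv rfl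
end

section
/- Let Σ and X be topological spaces and let (R_n)_{n∈ℕ} be a locally finite family of closed subsets of X whose union is X, such that R_n ∩ R_m = ∅ whenever m ≥ n + 2. Suppose that for each n there is a homeomorphism h_n from R_n (with the subspace topology) onto Σ × [n, n+1] such that h_n maps R_n ∩ R_{n+1} onto Σ × {n+1} for every n, and h_n maps R_{n-1} ∩ R_n onto Σ × {n} for every n ≥ 1. Then X is homeomorphic to Σ × [0, ∞). -/
/-!
The common boundary `R n ∩ R (n + 1)` is identified with `Y` twice: by `h n` as the top slice
and by `h (n + 1)` as the bottom slice. Composing `h (n + 1)` in the `Y`-factor with the resulting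
transition homeomorphism of `Y` makes it agree with `h n` there; doing this inductively gives
compatible charts `R n ≃ₜ Y × [n, n + 1]`. Since both the `R n` and the slabs `Y × [n, n + 1]`
are locally finite closed covers, these charts paste to a homeomorphism `X ≃ₜ Y × [0, ∞)`.
-/

open Set

section BoundaryTransition

variable {X Y I J : Type*} [TopologicalSpace X] [TopologicalSpace Y] [TopologicalSpace I]
  [TopologicalSpace J] {A B : Set X}

def boundaryTransition (e : A ≃ₜ Y × I) (e' : B ≃ₜ Y × J) {s : J}
    (he' : ∀ x : B, (x : X) ∈ A ↔ (e' x).2 = s) (y : Y) : Y :=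
  (e ⟨e'.symm (y, s), (he' _).2 (by rw [Homeomorph.apply_symm_apply])⟩).1

variable {e : A ≃ₜ Y × I} {e' : B ≃ₜ Y × J} {s : J}

theorem boundaryTransition_fst (he' : ∀ x : B, (x : X) ∈ A ↔ (e' x).2 = s) (x : B)
    (hx : (x : X) ∈ A) : boundaryTransition e e' he' (e' x).1 = (e ⟨x, hx⟩).1 := by
  have : e'.symm ((e' x).1, s) = x := by
    rw [← (he' x).1 hx, Homeomorph.symm_apply_apply]
  simp only [boundaryTransition, this]

theorem continuous_boundaryTransition (he' : ∀ x : B, (x : X) ∈ A ↔ (e' x).2 = s) :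
    Continuous (boundaryTransition e e' he') := by
  unfold boundaryTransition
  fun_prop

def boundaryTransitionHomeomorph {t : I} (he : ∀ x : A, (x : X) ∈ B ↔ (e x).2 = t)
    (he' : ∀ x : B, (x : X) ∈ A ↔ (e' x).2 = s) : Y ≃ₜ Y where
  toFun := boundaryTransition e e' he'
  invFun := boundaryTransition e' e he
  left_inv y := by
    set x := e'.symm (y, s)
    have hx : (x : X) ∈ A := (he' x).2 (by simp [x])
    rw [show y = (e' x).1 by simp [x], boundaryTransition_fst he' x hx,
      boundaryTransition_fst he ⟨x, hx⟩ x.2]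
  right_inv y := by
    set x := e.symm (y, t)
    have hx : (x : X) ∈ B := (he x).2 (by simp [x])
    rw [show y = (e x).1 by simp [x], boundaryTransition_fst he x hx,
      boundaryTransition_fst he' ⟨x, hx⟩ x.2]
  continuous_toFun := continuous_boundaryTransition he'
  continuous_invFun := continuous_boundaryTransition he

end BoundaryTransition

section LiftCover

variable {ι X Z : Type*} [TopologicalSpace X] [TopologicalSpace Z]

theorem continuous_liftCover_of_locallyFinite {S : ι → Set X} {f : ∀ i, S i → Z}
    {hf : ∀ i j (x : X) (hxi : x ∈ S i) (hxj : x ∈ S j), f i ⟨x, hxi⟩ = f j ⟨x, hxj⟩}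
    {hS : ⋃ i, S i = univ} (hlf : LocallyFinite S) (hc : ∀ i, IsClosed (S i))
    (hfc : ∀ i, Continuous (f i)) : Continuous (liftCover S f hf hS) :=
  hlf.continuous hS hc fun i => continuousOn_iff_continuous_domRestrict.2 <| by
    convert hfc i using 1
    exact funext fun x => liftCover_coe x

variable {R : ι → Set X} {T : ι → Set Z} (k : ∀ i, R i ≃ₜ T i)

theorem Homeomorph.symm_coe_eq_of_mem_inter
    (hk : ∀ i j (x : X) (hi : x ∈ R i) (hj : x ∈ R j), (k i ⟨x, hi⟩ : Z) = k j ⟨x, hj⟩)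
    (hmem : ∀ i j (x : R i), (k i x : Z) ∈ T j → (x : X) ∈ R j)
    (i j : ι) (z : Z) (hi : z ∈ T i) (hj : z ∈ T j) :
    ((k i).symm ⟨z, hi⟩ : X) = (k j).symm ⟨z, hj⟩ := by
  set x := (k i).symm ⟨z, hi⟩
  have hx : (x : X) ∈ R j := hmem i j x (by simpa [x] using hj)
  have : k j ⟨x, hx⟩ = ⟨z, hj⟩ := Subtype.ext <| by rw [← hk i j x x.2 hx]; simp [x]
  rw [← this, Homeomorph.symm_apply_apply]

noncomputable def Homeomorph.liftCover (hRlf : LocallyFinite R) (hRc : ∀ i, IsClosed (R i))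
    (hRu : ⋃ i, R i = univ) (hTlf : LocallyFinite T) (hTc : ∀ i, IsClosed (T i))
    (hTu : ⋃ i, T i = univ)
    (hk : ∀ i j (x : X) (hi : x ∈ R i) (hj : x ∈ R j), (k i ⟨x, hi⟩ : Z) = k j ⟨x, hj⟩)
    (hmem : ∀ i j (x : R i), (k i x : Z) ∈ T j → (x : X) ∈ R j) : X ≃ₜ Z where
  toFun := Set.liftCover R (fun i x => k i x) hk hRu
  invFun := Set.liftCover T (fun i z => (k i).symm z) (symm_coe_eq_of_mem_inter k hk hmem) hTu
  left_inv x := by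
    obtain ⟨i, hi⟩ := mem_iUnion.1 (hRu ▸ mem_univ x)
    rw [liftCover_of_mem hi, liftCover_of_mem (k i ⟨x, hi⟩).2]
    simp
  right_inv z := by
    obtain ⟨i, hi⟩ := mem_iUnion.1 (hTu ▸ mem_univ z)
    rw [liftCover_of_mem hi, liftCover_of_mem ((k i).symm ⟨z, hi⟩).2]
    simp
  continuous_toFun := continuous_liftCover_of_locallyFinite hRlf hRc fun i =>
    continuous_subtype_val.comp (k i).continuous
  continuous_invFun := continuous_liftCover_of_locallyFinite hTlf hTc fun i =>
    continuous_subtype_val.comp (k i).symm.continuous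

end LiftCover

def Homeomorph.prodSubtypeSnd {Y α : Type*} [TopologicalSpace Y] [TopologicalSpace α]
    {s t : Set α} (hst : s ⊆ t) :
    Y × s ≃ₜ {p : Y × t | (p.2 : α) ∈ s} where
  toFun p := ⟨(p.1, ⟨p.2, hst p.2.2⟩), p.2.2⟩
  invFun q := (q.1.1, ⟨q.1.2, q.2⟩)
  left_inv _ := rfl
  right_inv _ := rfl
  continuous_toFun := by fun_prop
  continuous_invFun := by fun_prop

theorem locallyFinite_Icc_natCast : LocallyFinite fun n : ℕ => Icc (n : ℝ) (n + 1) := by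
  have : LocallyFinite fun n : ℤ => Icc (n : ℝ) (n + 1) :=
    locallyFinite_Icc_of_tendsto tendsto_intCast_atTop_atTop <|
      Filter.tendsto_atBot_atBot.2 fun b => ⟨⌊b⌋ - 1, fun a ha => by
        have := Int.floor_le b
        have : (a : ℝ) ≤ ⌊b⌋ - 1 := by exact_mod_cast ha
        linarith⟩
  simpa [Function.comp_def] using this.comp_injective Nat.cast_injective

theorem eq_or_adjacent_of_mem_Icc {i j : ℕ} {t : ℝ} (hi : t ∈ Icc (i : ℝ) (i + 1))
    (hj : t ∈ Icc (j : ℝ) (j + 1)) : j = i ∨ (j = i + 1 ∧ t = i + 1) ∨ (i = j + 1 ∧ t = i) := by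
  have hij : i ≤ j + 1 := by exact_mod_cast hi.1.trans hj.2
  have hji : j ≤ i + 1 := by exact_mod_cast hj.1.trans hi.2
  rcases (by omega : j = i ∨ j = i + 1 ∨ i = j + 1) with h | rfl | rfl
  · exact .inl h
  · refine .inr (.inl ⟨rfl, le_antisymm hi.2 ?_⟩)
    exact_mod_cast hj.1
  · refine .inr (.inr ⟨rfl, le_antisymm ?_ hi.1⟩)
    exact_mod_cast hj.2

theorem eq_or_adjacent_of_mem_inter {X : Type*} {R : ℕ → Set X}
    (hdisj : ∀ n m : ℕ, n + 2 ≤ m → R n ∩ R m = ∅) {i j : ℕ} {x : X} (hi : x ∈ R i)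
    (hj : x ∈ R j) : j = i ∨ j = i + 1 ∨ i = j + 1 := by
  have far (n m : ℕ) (hn : x ∈ R n) (hm : x ∈ R m) : ¬n + 2 ≤ m := fun hnm =>
    (hdisj n m hnm).subset ⟨hn, hm⟩
  have := far i j hi hj
  have := far j i hj hi
  omega

section Slab

variable (Y : Type*)

def slab (n : ℕ) : Set (Y × Ici (0 : ℝ)) := {p | (p.2 : ℝ) ∈ Icc (n : ℝ) (n + 1)}

theorem iUnion_slab : ⋃ n, slab Y n = univ :=
  eq_univ_of_forall fun p =>
    mem_iUnion.2 ⟨⌊(p.2 : ℝ)⌋₊, Nat.floor_le p.2.2, (Nat.lt_floor_add_one _).le⟩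

variable [TopologicalSpace Y]

theorem isClosed_slab (n : ℕ) : IsClosed (slab Y n) :=
  isClosed_Icc.preimage (by fun_prop)

theorem locallyFinite_slab : LocallyFinite (slab Y) :=
  locallyFinite_Icc_natCast.preimage_continuous (by fun_prop)

end Slab

theorem mem_iff_snd_eq_of_image_eq {α Y : Type*} [TopologicalSpace α] [TopologicalSpace Y]
    {I : Set ℝ} (e : α ≃ₜ Y × I) {P : α → Prop} {t : I}
    (he : e '' {x | P x} = {p | (p.2 : ℝ) = t}) (x : α) : P x ↔ (e x).2 = t := by
  change x ∈ {x | P x} ↔ _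
  rw [Subtype.ext_iff, ← e.injective.mem_set_image, he]
  rfl

section Straightening

variable {X Y : Type*} [TopologicalSpace X] [TopologicalSpace Y]

abbrev upperEnd (n : ℕ) : Icc (n : ℝ) (n + 1) := ⟨n + 1, by simp⟩

abbrev lowerEnd (n : ℕ) : Icc (n : ℝ) (n + 1) := ⟨n, by simp⟩

variable {R : ℕ → Set X} (h : ∀ n, R n ≃ₜ Y × Icc (n : ℝ) (n + 1))
  (hup : ∀ n (x : R n), (x : X) ∈ R (n + 1) ↔ (h n x).2 = upperEnd n)
  (hdown : ∀ n (x : R (n + 1)), (x : X) ∈ R n ↔ (h (n + 1) x).2 = lowerEnd (n + 1))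

def correction : ℕ → Y ≃ₜ Y
  | 0 => Homeomorph.refl Y
  | n + 1 => boundaryTransitionHomeomorph  -- `e` is `straightened n` below
      (e := (h n).trans ((correction n).prodCongr (.refl _))) (hup n) (hdown n)

def straightened (n : ℕ) : R n ≃ₜ Y × Icc (n : ℝ) (n + 1) :=
  (h n).trans ((correction h hup hdown n).prodCongr (.refl _))

theorem straightened_succ_fst {n : ℕ} {x : X} (hx : x ∈ R n) (hx' : x ∈ R (n + 1)) :
    (straightened h hup hdown (n + 1) ⟨x, hx'⟩).1 = (straightened h hup hdown n ⟨x, hx⟩).1 :=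
  boundaryTransition_fst (e := straightened h hup hdown n) (hdown n) ⟨x, hx'⟩ hx

def straightenedSlab (n : ℕ) : R n ≃ₜ slab Y n :=
  (straightened h hup hdown n).trans <|
    Homeomorph.prodSubtypeSnd fun _ ht => (Nat.cast_nonneg n).trans ht.1

theorem straightenedSlab_compat (hdisj : ∀ n m : ℕ, n + 2 ≤ m → R n ∩ R m = ∅) (i j : ℕ) (x : X)
    (hi : x ∈ R i) (hj : x ∈ R j) :
    (straightenedSlab h hup hdown i ⟨x, hi⟩ : Y × Ici (0 : ℝ)) =
      straightenedSlab h hup hdown j ⟨x, hj⟩ := by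
  have succ (n : ℕ) (hx : x ∈ R n) (hx' : x ∈ R (n + 1)) :
      (straightenedSlab h hup hdown n ⟨x, hx⟩ : Y × Ici (0 : ℝ)) =
        straightenedSlab h hup hdown (n + 1) ⟨x, hx'⟩ := by
    refine Prod.ext (straightened_succ_fst h hup hdown hx hx').symm (Subtype.ext ?_)
    change ((h n ⟨x, hx⟩).2 : ℝ) = (h (n + 1) ⟨x, hx'⟩).2
    rw [(hup n ⟨x, hx⟩).1 hx', (hdown n ⟨x, hx'⟩).1 hx]
    push_cast
    rfl
  rcases eq_or_adjacent_of_mem_inter hdisj hi hj with rfl | rfl | rfl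
  · rfl
  · exact succ i hi hj
  · exact (succ j hj hi).symm

theorem mem_of_straightenedSlab_mem {i j : ℕ} (x : R i)
    (hx : (straightenedSlab h hup hdown i x : Y × Ici (0 : ℝ)) ∈ slab Y j) : (x : X) ∈ R j := by
  rcases eq_or_adjacent_of_mem_Icc (h i x).2.2 hx with rfl | ⟨rfl, ht⟩ | ⟨rfl, ht⟩
  · exact x.2
  · exact (hup i x).2 (Subtype.ext ht)
  · exact (hdown j x).2 (Subtype.ext ht)

end Straightening

/-- Gluing product regions: if `X` is covered by a locally finite family of closed sets
`R n`, with `R n ∩ R m = ∅` whenever `m ≥ n + 2`, and each `R n` is homeomorphic to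
`Y × [n, n+1]` via a homeomorphism carrying `R n ∩ R (n+1)` onto the slice `Y × {n+1}` and
(for `n ≥ 1`) `R (n-1) ∩ R n` onto the slice `Y × {n}`, then `X` is homeomorphic to
`Y × [0, ∞)`. -/
theorem homeomorph_prod_Ici_of_glued_product_regions {Y X : Type*} [TopologicalSpace Y]
    [TopologicalSpace X] (R : ℕ → Set X) (hlf : LocallyFinite R)
    (hclosed : ∀ n, IsClosed (R n)) (hcover : ⋃ n, R n = Set.univ)
    (hdisj : ∀ n m : ℕ, n + 2 ≤ m → R n ∩ R m = ∅)
    (h : ∀ n : ℕ, ↥(R n) ≃ₜ Y × ↥(Set.Icc (n : ℝ) (n + 1)))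
    (hup : ∀ n : ℕ, ⇑(h n) '' {x : ↥(R n) | (x : X) ∈ R (n + 1)} =
      {p : Y × ↥(Set.Icc (n : ℝ) (n + 1)) | (p.2 : ℝ) = n + 1})
    (hdown : ∀ n : ℕ, 1 ≤ n → ⇑(h n) '' {x : ↥(R n) | (x : X) ∈ R (n - 1)} =
      {p : Y × ↥(Set.Icc (n : ℝ) (n + 1)) | (p.2 : ℝ) = n}) :
    Nonempty (X ≃ₜ Y × ↥(Set.Ici (0 : ℝ))) := by
  have hup' (n : ℕ) : ∀ x : R n, (x : X) ∈ R (n + 1) ↔ (h n x).2 = upperEnd n :=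
    mem_iff_snd_eq_of_image_eq (h n) (hup n)
  have hdown' (n : ℕ) : ∀ x : R (n + 1), (x : X) ∈ R n ↔ (h (n + 1) x).2 = lowerEnd (n + 1) :=
    mem_iff_snd_eq_of_image_eq (h (n + 1)) (hdown (n + 1) n.succ_pos)
  exact ⟨Homeomorph.liftCover (straightenedSlab h hup' hdown') hlf hclosed hcover
    (locallyFinite_slab Y) (isClosed_slab Y) (iUnion_slab Y)
    (straightenedSlab_compat h hup' hdown' hdisj)
    fun _ _ => mem_of_straightenedSlab_mem h hup' hdown'⟩
end
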